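/- Fix an integer m ≥ 1 and a real p. Define P : (ZMod 3) × (ZMod 3) → ℝ by P(0,0) = p and P(i,j) = (1−p)/8 otherwise, let r : (ZMod 3) × (ZMod 3) → ℝ satisfy Σ_{i,j} r(i,j) = 1, and set A_m = ((3p+1)/4)^m, B_m = ((9p−1)/8)^m, C_m = (3(1−p)/8)^m. Then for every s ∈ ZMod 3 with s ≠ 0 and every t ∈ ZMod 3, the sum, over all tuples ((x₀,z₀),(x₁,z₁),…,(x_m,z_m)) ∈ ((ZMod 3) × (ZMod 3))^{m+1} satisfying z₁ = z₂ = ⋯ = z_m, z₀ − z₁ = t, x₀ = s, and x₀ + x₁ + ⋯ + x_m = 0 in ZMod 3, of r(x₀,z₀)·∏_{k=1}^m P(x_k,z_k), equals (1/3)·[r(s,t)·(A_m − B_m) + (r(s,t+1) + r(s,t+2))·C_m]. -/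

import Mathlib

/-! The constraints pin `x₀ = s` and `z_k = z₀ - t` for every carrier, so the sum factors as
`∑ z₀, r (s, z₀) * Q_{z₀-t}^{*m} (-s)`, where `Q_w = P (·, w)` and `^{*m}` is the `m`-fold
additive convolution power on `ZMod 3`. On a finite group of order `n`, the convolution powers
of `c + d • δ₀` are `((n c + d)^m - d^m) / n + d^m δ₀`, by induction on `m`. The row `Q_0` has
`c = (1 - p) / 8`, `d = p - c`, and every other row has `d = 0`. -/

open Finset

section ConvolutionPower

variable {G R : Type*} [AddCommGroup G] [Fintype G] [DecidableEq G] [CommRing R]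

def convPow (Q : G → R) (m : ℕ) (a : G) : R :=
  ∑ x ∈ univ.filter (fun x : Fin m → G => ∑ k, x k = a), ∏ k, Q (x k)

theorem convPow_zero (Q : G → R) (a : G) : convPow Q 0 a = if a = 0 then 1 else 0 := by
  simp only [convPow, univ_unique, sum_filter, sum_singleton, univ_eq_empty, sum_empty,
    prod_empty]
  simp [eq_comm]

theorem convPow_succ (Q : G → R) (m : ℕ) (a : G) :
    convPow Q (m + 1) a = ∑ b, Q b * convPow Q m (a - b) := by
  simp only [convPow, sum_filter, mul_sum]
  rw [← (Fin.consEquiv fun _ => G).sum_comp, Fintype.sum_prod_type]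
  refine sum_congr rfl fun b _ => sum_congr rfl fun y _ => ?_
  simp [Fin.sum_univ_succ, Fin.prod_univ_succ, eq_sub_iff_add_eq', mul_ite]

theorem card_mul_convPow_of_eq_add_ite (Q : G → R) (c d : R)
    (hQ : ∀ b, Q b = c + if b = 0 then d else 0) (m : ℕ) (a : G) :
    Fintype.card G * convPow Q m a =
      (Fintype.card G * c + d) ^ m - d ^ m + if a = 0 then Fintype.card G * d ^ m else 0 := by
  induction m generalizing a with
  | zero => simp [convPow_zero]
  | succ m ih =>
    have hsum : ∑ b, Q b = Fintype.card G * c + d := by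
      simp [hQ, sum_add_distrib]
    calc (Fintype.card G : R) * convPow Q (m + 1) a
        = ∑ b, Q b * (Fintype.card G * convPow Q m (a - b)) := by
          rw [convPow_succ, mul_sum]
          exact sum_congr rfl fun b _ => mul_left_comm _ _ _
      _ = (∑ b, Q b) * ((Fintype.card G * c + d) ^ m - d ^ m)
            + Q a * (Fintype.card G * d ^ m) := by
          simp [ih, mul_add, sum_add_distrib, sum_mul, sub_eq_zero, mul_ite]
      _ = _ := by
          rw [hsum, hQ]; split_ifs <;> ring

-- For fixed `z₀`, the tuple is determined by `x₁, …, x_m`, subject only to `∑ x_k = -s`.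
theorem sum_filter_syndrome_eq_sum_convPow (m : ℕ) (P r : G × G → R) (s t : G) :
    ∑ e ∈ univ.filter
        (fun e : (G × G) × (Fin m → G × G) =>
          (∀ i j : Fin m, (e.2 i).2 = (e.2 j).2) ∧
          (∀ i : Fin m, e.1.2 - (e.2 i).2 = t) ∧
          e.1.1 = s ∧
          e.1.1 + ∑ k : Fin m, (e.2 k).1 = 0),
        r e.1 * ∏ k : Fin m, P (e.2 k)
      = ∑ z, r (s, z) * convPow (fun g => P (g, z - t)) m (-s) := by
  simp only [convPow, mul_sum, ← sum_product']
  refine sum_nbij' (fun e => (e.1.2, fun k => (e.2 k).1))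
    (fun zx => ((s, zx.1), fun k => (zx.2 k, zx.1 - t))) ?_ ?_ ?_ (fun _ _ => rfl) ?_
  · rintro ⟨⟨x₀, z₀⟩, f⟩ he
    simp only [mem_filter, mem_univ, true_and, mem_product] at he ⊢
    grind
  · rintro ⟨z, x⟩ hx
    simp only [mem_filter, mem_univ, true_and, mem_product] at hx ⊢
    grind
  · rintro ⟨⟨x₀, z₀⟩, f⟩ he
    obtain ⟨-, hz, rfl, -⟩ := (mem_filter.1 he).2
    exact Prod.ext rfl (funext fun k => Prod.ext rfl (by simp [← hz k]))
  · rintro ⟨⟨x₀, z₀⟩, f⟩ he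
    obtain ⟨-, hz, rfl, -⟩ := (mem_filter.1 he).2
    congr 1
    exact prod_congr rfl fun k _ => by rw [← hz k, sub_sub_cancel]

end ConvolutionPower

theorem mcaepp_joint_probability_s_ne_zero_general (m : ℕ) (hm : 1 ≤ m) (p : ℝ)
    (P : ZMod 3 × ZMod 3 → ℝ)
    (hP0 : P (0, 0) = p) (hP : ∀ x : ZMod 3 × ZMod 3, x ≠ (0, 0) → P x = (1 - p) / 8)
    (r : ZMod 3 × ZMod 3 → ℝ)
    (s : ZMod 3) (hs : s ≠ 0) (t : ZMod 3) :
    ∑ e ∈ Finset.univ.filter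
        (fun e : (ZMod 3 × ZMod 3) × (Fin m → ZMod 3 × ZMod 3) =>
          (∀ i j : Fin m, (e.2 i).2 = (e.2 j).2) ∧
          (∀ i : Fin m, e.1.2 - (e.2 i).2 = t) ∧
          e.1.1 = s ∧
          e.1.1 + ∑ k : Fin m, (e.2 k).1 = 0),
        r e.1 * ∏ k : Fin m, P (e.2 k)
      = (1 / 3) * (r (s, t) * (((3 * p + 1) / 4) ^ m - ((9 * p - 1) / 8) ^ m)
          + (r (s, t + 1) + r (s, t + 2)) * ((3 * (1 - p)) / 8) ^ m) := by
  have hP_eq : ∀ w g, P (g, w) =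
      (1 - p) / 8 + if g = 0 then (if w = 0 then p - (1 - p) / 8 else 0) else 0 := by
    intro w g
    by_cases h : (g, w) = (0, 0)
    · simp_all
    · rw [hP _ h]
      grind
  have hconv : ∀ w, convPow (fun g => P (g, w)) m (-s)
      = (1 / 3) * if w = 0 then ((3 * p + 1) / 4) ^ m - ((9 * p - 1) / 8) ^ m
        else ((3 * (1 - p)) / 8) ^ m := by
    intro w
    have h := card_mul_convPow_of_eq_add_ite _ _ _ (hP_eq w) m (-s)
    rw [ZMod.card, if_neg (neg_ne_zero.2 hs)] at h
    split_ifs at h ⊢ with hw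
    · linear_combination h / 3
    · simp [zero_pow (by omega : m ≠ 0)] at h
      linear_combination h / 3
  rw [sum_filter_syndrome_eq_sum_convPow]
  simp only [hconv]
  rw [← Equiv.sum_comp (Equiv.addLeft t), show ∀ f : ZMod 3 → ℝ, ∑ u, f u = f 0 + f 1 + f 2 from
    Fin.sum_univ_three]
  simp [show (2 : ZMod 3) ≠ 0 by decide]
  ring

/-- Appendix A: the unnormalized joint probability `E[δ_{st}]` for nonzero
output shift label `s` of the `m`-carrier qutrit purification round: the sum
over configurations with `z₁ = ⋯ = z_m`, `z₀ − z₁ = t`, `x₀ = s` and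
`x₀ + x₁ + ⋯ + x_m = 0 (mod 3)` of `r(x₀,z₀)·∏_k P(x_k,z_k)` equals
`(1/3)[r(s,t)(A_m − B_m) + (r(s,t+1) + r(s,t+2))C_m]`. -/
theorem mcaepp_joint_probability_s_ne_zero (m : ℕ) (hm : 1 ≤ m) (p : ℝ)
    (P : ZMod 3 × ZMod 3 → ℝ)
    (hP0 : P (0, 0) = p) (hP : ∀ x : ZMod 3 × ZMod 3, x ≠ (0, 0) → P x = (1 - p) / 8)
    (r : ZMod 3 × ZMod 3 → ℝ) (hr : ∑ x : ZMod 3 × ZMod 3, r x = 1)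
    (s : ZMod 3) (hs : s ≠ 0) (t : ZMod 3) :
    ∑ e ∈ Finset.univ.filter
        (fun e : (ZMod 3 × ZMod 3) × (Fin m → ZMod 3 × ZMod 3) =>
          (∀ i j : Fin m, (e.2 i).2 = (e.2 j).2) ∧
          (∀ i : Fin m, e.1.2 - (e.2 i).2 = t) ∧
          e.1.1 = s ∧
          e.1.1 + ∑ k : Fin m, (e.2 k).1 = 0),
        r e.1 * ∏ k : Fin m, P (e.2 k)
      = (1 / 3) * (r (s, t) * (((3 * p + 1) / 4) ^ m - ((9 * p - 1) / 8) ^ m)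
          + (r (s, t + 1) + r (s, t + 2)) * ((3 * (1 - p)) / 8) ^ m) :=
  mcaepp_joint_probability_s_ne_zero_general m hm p P hP0 hP r s hs t
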